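/- arXiv:1709.08734 — 5 statements merged into one kernel-verified Lean document; each statement's English description precedes it below -/
import Mathlib

section
/- A nonempty topological space X inverts weak homotopy equivalences (i.e., for every weak homotopy equivalence f : A → B, the induced map f* : [B,X] → [A,X] on homotopy classes of maps is a bijection) if and only if X is contractible. -/
open ContinuousMap Topology

noncomputable section

/-- The setoid of homotopy on continuous maps `C(A, X)`. -/
def homotopySetoid (A X : Type*) [TopologicalSpace A] [TopologicalSpace X] :
    Setoid C(A, X) :=
  ⟨ContinuousMap.Homotopic, ContinuousMap.Homotopic.equivalence⟩

/-- `[A, X]`: homotopy classes of continuous maps `A → X`. -/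
def HtpyClasses (A X : Type*) [TopologicalSpace A] [TopologicalSpace X] : Type _ :=
  Quotient (homotopySetoid A X)

/-- Precomposition `f^* : [B, X] → [A, X]`, `[g] ↦ [g ∘ f]`. -/
def precomp {A B X : Type*} [TopologicalSpace A] [TopologicalSpace B] [TopologicalSpace X]
    (f : C(A, B)) : HtpyClasses B X → HtpyClasses A X :=
  Quotient.map (fun g => g.comp f)
    (fun _ _ h => ContinuousMap.Homotopic.comp h (ContinuousMap.Homotopic.refl f))

/-- The induced map on path components. -/
def zerothMap {A B : Type*} [TopologicalSpace A] [TopologicalSpace B] (f : C(A, B)) :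
    ZerothHomotopy A → ZerothHomotopy B :=
  Quotient.map f (fun _ _ h => Nonempty.map (fun p => p.map f.continuous) h)

/-- The induced map on `n`-th homotopy groups. -/
def piMap {A B : Type*} [TopologicalSpace A] [TopologicalSpace B] (f : C(A, B)) (n : ℕ)
    (a : A) : HomotopyGroup (Fin n) A a → HomotopyGroup (Fin n) B (f a) :=
  Quotient.map
    (fun p => ⟨f.comp p.1, fun y hy => by rw [ContinuousMap.comp_apply, p.2 y hy]⟩)
    (fun _ _ h => Nonempty.map (fun H => H.compContinuousMap f) h)

/-- A continuous map is a weak homotopy equivalence if it induces a bijection on path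
components and isomorphisms on all homotopy groups at all basepoints. -/
def IsWeakHomotopyEquiv {A B : Type*} [TopologicalSpace A] [TopologicalSpace B]
    (f : C(A, B)) : Prop :=
  Function.Bijective (zerothMap f) ∧ ∀ (n : ℕ) (a : A), Function.Bijective (piMap f n a)

/-- `X` inverts weak homotopy equivalences: every weak homotopy equivalence `f : A → B`
induces a bijection `f^* : [B, X] → [A, X]`. -/
def InvertsWeakEquivs (X : Type) [TopologicalSpace X] : Prop :=
  ∀ (A B : Type) [TopologicalSpace A] [TopologicalSpace B] (f : C(A, B)),
    IsWeakHomotopyEquiv f → Function.Bijective (precomp (X := X) f)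

/-!
Given `p q : C(Q, X)`, let `I` be a discrete set of cardinality larger than `#(Q × Set X) * ℵ₀`.
The bijection `I ⊕ Unit → OnePoint I` is a weak homotopy equivalence, even after taking the
product with `Q`, because `OnePoint I` is totally disconnected, so that every map from a cube into
it lifts. If `X` inverts weak equivalences, the map `(I ⊕ Unit) × Q → X` equal to `p` on `I × Q`
and to `q` on `Unit × Q` therefore extends, up to homotopy, to some `M : OnePoint I × Q → X`.
Each pair of a point `v` and an open neighbourhood `U` of `M (∞, v)` excludes only finitely many
`i` from `M (i, v) ∈ U`, so for some `i` the column `M (i, ·)` specializes pointwise to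
`M (∞, ·)`, and pointwise specialization is a homotopy. Hence `p ≃ M (i, ·) ≃ M (∞, ·) ≃ q`, and
taking `p = id` and `q` constant shows that `X` is contractible.
-/

section Lifting

variable {A B : Type*} [TopologicalSpace A] [TopologicalSpace B]

def LiftsPreconnected (f : C(A, B)) : Prop :=
  ∀ (D : Type) [TopologicalSpace D] [PreconnectedSpace D] (h : C(D, B)),
    ∃ h' : C(D, A), f.comp h' = h

namespace LiftsPreconnected

variable {f : C(A, B)}

theorem of_surjective [TotallyDisconnectedSpace B] (hf : Function.Surjective f) :
    LiftsPreconnected f := by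
  intro D _ _ h
  have hconst (d d' : D) : h d = h d' :=
    (isPreconnected_range h.continuous).subsingleton ⟨d, rfl⟩ ⟨d', rfl⟩
  refine ⟨⟨Function.surjInv hf ∘ h, continuous_of_const fun d d' => ?_⟩, ?_⟩
  · simp only [Function.comp_apply, hconst d d']
  · exact ContinuousMap.ext fun d => Function.surjInv_eq hf (h d)

theorem prodMap_id (hf : LiftsPreconnected f) (Q : Type*) [TopologicalSpace Q] :
    LiftsPreconnected (f.prodMap (ContinuousMap.id Q)) := by
  intro D _ _ h
  obtain ⟨h₁, hh₁⟩ := hf D (ContinuousMap.fst.comp h)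
  refine ⟨h₁.prodMk (ContinuousMap.snd.comp h), ContinuousMap.ext fun d => ?_⟩
  exact Prod.ext (DFunLike.congr_fun hh₁ d) rfl

theorem surjective (hf : LiftsPreconnected f) : Function.Surjective f := fun b =>
  let ⟨h', hh'⟩ := hf Unit (const Unit b)
  ⟨h' (), DFunLike.congr_fun hh' ()⟩

theorem joined (hf : LiftsPreconnected f) (hinj : Function.Injective f) {a a' : A}
    (h : Joined (f a) (f a')) : Joined a a' := by
  obtain ⟨γ⟩ := h
  obtain ⟨γ', hγ'⟩ := hf unitInterval γ.toContinuousMap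
  have hlift (t) : f (γ' t) = γ t := DFunLike.congr_fun hγ' t
  exact ⟨⟨γ', hinj <| (hlift 0).trans γ.source, hinj <| (hlift 1).trans γ.target⟩⟩

theorem homotopicRel (hf : LiftsPreconnected f) (hinj : Function.Injective f) {D : Type}
    [TopologicalSpace D] [PreconnectedSpace D] {u u' : C(D, A)} {S : Set D}
    (h : (f.comp u).HomotopicRel (f.comp u') S) : u.HomotopicRel u' S := by
  obtain ⟨H⟩ := h
  obtain ⟨H', hH'⟩ := hf (unitInterval × D) H.toContinuousMap
  have hlift (z) : f (H' z) = H z := DFunLike.congr_fun hH' z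
  exact ⟨{ toContinuousMap := H'
           map_zero_left x := hinj <| (hlift _).trans (H.apply_zero x)
           map_one_left x := hinj <| (hlift _).trans (H.apply_one x)
           prop' t x hx := hinj <| (hlift _).trans (H.eq_fst t hx) }⟩

theorem isWeakHomotopyEquiv (hf : LiftsPreconnected f) (hinj : Function.Injective f) :
    IsWeakHomotopyEquiv f := by
  refine ⟨⟨?_, ?_⟩, fun n a => ⟨?_, ?_⟩⟩
  · rintro ⟨a⟩ ⟨a'⟩ h
    exact Quotient.sound (hf.joined hinj (Quotient.exact h))
  · rintro ⟨b⟩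
    obtain ⟨a, rfl⟩ := hf.surjective b
    exact ⟨⟦a⟧, rfl⟩
  · rintro ⟨u⟩ ⟨u'⟩ h
    exact Quotient.sound (hf.homotopicRel hinj (Quotient.exact h))
  · rintro ⟨g⟩
    obtain ⟨g', hg'⟩ := hf _ g.1
    have hbd (y) (hy : y ∈ Cube.boundary (Fin n)) : g' y = a :=
      hinj <| (DFunLike.congr_fun hg' y).trans (g.2 y hy)
    exact ⟨⟦⟨g', hbd⟩⟧, congrArg _ (Subtype.ext hg')⟩

end LiftsPreconnected

end Lifting

namespace OnePoint

section Discrete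

variable {I : Type*} [TopologicalSpace I] [DiscreteTopology I]

theorem isClopen_singleton_coe (i : I) : IsClopen ({(i : OnePoint I)} : Set (OnePoint I)) := by
  rw [← Set.image_singleton]
  exact ⟨isClosed_image_coe.2 ⟨isClosed_discrete _, isCompact_singleton⟩,
    isOpen_image_coe.2 (isOpen_discrete _)⟩

instance totallyDisconnectedSpace : TotallyDisconnectedSpace (OnePoint I) := by
  refine ⟨fun s _ hs => ?_⟩
  have hcoe (i : I) (hi : (i : OnePoint I) ∈ s) : s ⊆ {(i : OnePoint I)} :=
    hs.subset_isClopen (isClopen_singleton_coe i) ⟨i, hi, rfl⟩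
  intro x hx y hy
  induction x using OnePoint.rec with
  | coe i => exact (hcoe i hx hy).symm
  | infty =>
    induction y using OnePoint.rec with
    | coe j => exact hcoe j hy hx
    | infty => rfl

theorem finite_compl_preimage_coe {s : Set (OnePoint I)} (hs : IsOpen s) (h : ∞ ∈ s) :
    Set.Finite ((↑) ⁻¹' s : Set I)ᶜ :=
  ((isOpen_iff_of_mem' h).1 hs).1.finite_of_discrete

end Discrete

open Cardinal in
theorem exists_coe_specializes_infty {I Q X : Type} [TopologicalSpace I] [DiscreteTopology I]
    [TopologicalSpace Q] [TopologicalSpace X] (M : C(OnePoint I × Q, X))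
    (hI : #(Q × Set X) * ℵ₀ < #I) : ∃ i : I, ∀ v, M (↑i, v) ⤳ M (∞, v) := by
  let J := {j : Q × Set X // IsOpen j.2 ∧ M (∞, j.1) ∈ j.2}
  let excluded (j : J) : Set I := {i | M (↑i, j.1.1) ∉ j.1.2}
  have hfinite (j : J) : (excluded j).Finite := by
    have hU : IsOpen ((fun w => M (w, j.1.1)) ⁻¹' j.1.2) := j.2.1.preimage (by fun_prop)
    exact finite_compl_preimage_coe hU j.2.2
  have hsmall : #(⋃ j, excluded j) < #I := calc
    #(⋃ j, excluded j) ≤ #J * ⨆ j, #(excluded j) := mk_iUnion_le excluded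
    _ ≤ #(Q × Set X) * ℵ₀ :=
      mul_le_mul' (mk_subtype_le _) (ciSup_le' fun j => (hfinite j).lt_aleph0.le)
    _ < #I := hI
  obtain ⟨i, hi⟩ := compl_nonempty_of_mk_lt_mk hsmall
  refine ⟨i, fun v => specializes_iff_forall_open.2 fun U hU hmem => ?_⟩
  by_contra hiU
  exact hi (Set.mem_iUnion.2 ⟨⟨(v, U), hU, hmem⟩, hiU⟩)

end OnePoint

theorem ContinuousMap.Homotopic.of_specializes {Q X : Type*} [TopologicalSpace Q]
    [TopologicalSpace X] {p q : C(Q, X)} (h : ∀ v, p v ⤳ q v) : p.Homotopic q := by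
  let H (z : unitInterval × Q) : X := if z.1 = 1 then q z.2 else p z.2
  have hH : Continuous H := by
    refine continuous_def.2 fun U hU => ?_
    have hpre : H ⁻¹' U = {t | t ≠ 1} ×ˢ (p ⁻¹' U) ∪ Set.univ ×ˢ (q ⁻¹' U) := by
      ext ⟨t, v⟩
      by_cases ht : t = 1
      · simp [H, ht]
      · simpa [H, ht] using fun hq => specializes_iff_forall_open.1 (h v) U hU hq
    rw [hpre]
    exact (isOpen_ne.prod (hU.preimage p.continuous)).union
      (isOpen_univ.prod (hU.preimage q.continuous))
  exact ⟨{ toFun := H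
           continuous_toFun := hH
           map_zero_left _ := if_neg zero_ne_one
           map_one_left _ := if_pos rfl }⟩

theorem ContinuousMap.homotopic_of_contractibleSpace {E X : Type*} [TopologicalSpace E]
    [TopologicalSpace X] [ContractibleSpace X] (f g : C(E, X)) : f.Homotopic g := by
  obtain ⟨x, hx⟩ := id_nullhomotopic X
  have hconst (h : C(E, X)) : h.Homotopic (const E x) := hx.comp (.refl h)
  exact (hconst f).trans (hconst g).symm

instance {E X : Type*} [TopologicalSpace E] [TopologicalSpace X] [ContractibleSpace X] :
    Subsingleton (HtpyClasses E X) :=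
  ⟨by rintro ⟨f⟩ ⟨g⟩; exact Quotient.sound (homotopic_of_contractibleSpace f g)⟩

theorem precomp_bijective_of_contractibleSpace {A B X : Type*} [TopologicalSpace A]
    [TopologicalSpace B] [TopologicalSpace X] [ContractibleSpace X] (f : C(A, B)) :
    Function.Bijective (precomp (X := X) f) :=
  ⟨Function.injective_of_subsingleton _,
    fun c => ⟨⟦ContinuousMap.const B (Classical.arbitrary X)⟧, Subsingleton.elim _ c⟩⟩

open Cardinal OnePoint in
theorem InvertsWeakEquivs.homotopic_of_lt_mk {X : Type} [TopologicalSpace X]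
    (hX : InvertsWeakEquivs X) {I Q : Type} [TopologicalSpace I] [DiscreteTopology I]
    [TopologicalSpace Q] (hI : #(Q × Set X) * ℵ₀ < #I)
    (p q : C(Q, X)) : p.Homotopic q := by
  let f : C(I ⊕ Unit, OnePoint I) := ⟨Sum.elim (↑) fun _ => ∞, continuous_of_discreteTopology⟩
  have hf_inj : Function.Injective f :=
    coe_injective.sumElim (fun _ _ _ => rfl) fun i _ => coe_ne_infty i
  have hf_surj : Function.Surjective f := fun w => by
    induction w using OnePoint.rec with
    | infty => exact ⟨.inr (), rfl⟩
    | coe i => exact ⟨.inl i, rfl⟩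
  let F := f.prodMap (ContinuousMap.id Q)
  have hF : IsWeakHomotopyEquiv F :=
    ((LiftsPreconnected.of_surjective hf_surj).prodMap_id Q).isWeakHomotopyEquiv
      (hf_inj.prodMap Function.injective_id)
  let g : C((I ⊕ Unit) × Q, X) :=
    ⟨fun z => Sum.elim (fun _ => p z.2) (fun _ => q z.2) z.1,
      continuous_prod_of_discrete_left.2 fun a => by cases a; exacts [p.continuous, q.continuous]⟩
  obtain ⟨⟨M⟩, hM⟩ := (hX _ _ F hF).2 ⟦g⟧
  have hMg : (M.comp F).Homotopic g := Quotient.exact hM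
  have hslice (a : I ⊕ Unit) :=
    hMg.comp (.refl ((ContinuousMap.const Q a).prodMk (ContinuousMap.id Q)))
  obtain ⟨i, hi⟩ := exists_coe_specializes_infty M hI
  exact (hslice (.inl i)).symm.trans ((Homotopic.of_specializes hi).trans (hslice (.inr ())))

open Cardinal in
theorem InvertsWeakEquivs.homotopic {X : Type} [TopologicalSpace X] (hX : InvertsWeakEquivs X)
    {Q : Type} [TopologicalSpace Q] (p q : C(Q, X)) : p.Homotopic q := by
  let : TopologicalSpace (Set (Q × Set X × ℕ)) := ⊥
  have : DiscreteTopology (Set (Q × Set X × ℕ)) := ⟨rfl⟩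
  refine hX.homotopic_of_lt_mk (I := Set (Q × Set X × ℕ)) ?_ p q
  rw [mk_set]
  calc #(Q × Set X) * ℵ₀ = #(Q × Set X × ℕ) := by simp [mk_prod, mul_assoc]
    _ < 2 ^ #(Q × Set X × ℕ) := cantor _

/-- A non-empty space inverts weak homotopy equivalences iff it is contractible. -/
theorem stmt0 (X : Type) [TopologicalSpace X] [Nonempty X] :
    InvertsWeakEquivs X ↔ ContractibleSpace X := by
  refine ⟨fun hX => ?_, fun _ _ _ _ _ f _ => precomp_bijective_of_contractibleSpace f⟩
  obtain ⟨x₀⟩ := ‹Nonempty X›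
  exact (contractible_iff_id_nullhomotopic X).2 ⟨x₀, hX.homotopic _ _⟩
end
end

section
/- If a topological space X inverts weak homotopy equivalences and X is weakly contractible (all homotopy groups trivial and path-connected), then X is contractible. -/
open ContinuousMap Topology

noncomputable section

theorem HomotopyGroup.subsingleton_of_subsingleton (N : Type*) {X : Type*} [TopologicalSpace X]
    [Subsingleton X] (x : X) : Subsingleton (HomotopyGroup N X x) :=
  have : Subsingleton (GenLoop N X x) := ⟨fun _ _ => Subtype.ext (Subsingleton.elim _ _)⟩
  Quot.Subsingleton

theorem isWeakHomotopyEquiv_of_homotopyGroup_subsingleton {A B : Type*} [TopologicalSpace A]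
    [TopologicalSpace B] [PathConnectedSpace A] [PathConnectedSpace B]
    (hA : ∀ (n : ℕ) (a : A), Subsingleton (HomotopyGroup (Fin n) A a))
    (hB : ∀ (n : ℕ) (b : B), Subsingleton (HomotopyGroup (Fin n) B b)) (f : C(A, B)) :
    IsWeakHomotopyEquiv f := by
  obtain ⟨_, _⟩ := pathConnectedSpace_iff_zerothHomotopy.mp ‹PathConnectedSpace A›
  obtain ⟨_, _⟩ := pathConnectedSpace_iff_zerothHomotopy.mp ‹PathConnectedSpace B›
  refine ⟨⟨Function.injective_of_subsingleton _, Function.surjective_to_subsingleton _⟩,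
    fun n a => ?_⟩
  have := hA n a
  have := hB n (f a)
  exact ⟨Function.injective_of_subsingleton _, Function.surjective_to_subsingleton _⟩

theorem ContractibleSpace.of_surjective_precomp_const {X : Type*} [TopologicalSpace X]
    (hX : Function.Surjective (precomp (X := X) (ContinuousMap.const X ()))) :
    ContractibleSpace X := by
  obtain ⟨g, hg⟩ := hX ⟦ContinuousMap.id X⟧
  induction g using Quotient.ind with | _ g
  rw [contractible_iff_id_nullhomotopic]
  exact ⟨g (), (Quotient.exact hg).symm⟩

/-- If `X` inverts weak homotopy equivalences and is weakly contractible, it is contractible. -/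
theorem stmt1 (X : Type) [TopologicalSpace X] (h : InvertsWeakEquivs X)
    (hpc : PathConnectedSpace X)
    (htriv : ∀ (n : ℕ) (x : X), Subsingleton (HomotopyGroup (Fin n) X x)) :
    ContractibleSpace X :=
  have hf : IsWeakHomotopyEquiv (ContinuousMap.const X ()) :=
    isWeakHomotopyEquiv_of_homotopyGroup_subsingleton htriv
      (fun _ => HomotopyGroup.subsingleton_of_subsingleton _) _
  ContractibleSpace.of_surjective_precomp_const (h X Unit _ hf).2
end
end

section
/- If a topological space X inverts weak homotopy equivalences, then X is connected. -/
/-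
The identity map from `ℝ` with the discrete topology to `ℝ` with the cocountable topology is a
weak homotopy equivalence: compact subsets of the cocountable reals are finite, hence discrete, so
every path, sphere and homotopy into them is constant. The cocountable reals are irreducible, hence
connected. If `X` inverts weak homotopy equivalences, the map from the discrete reals to `X` taking
the values `x` and `y` is therefore homotopic to one that factors through a connected space, which
puts `x` and `y` in the same connected component.
-/

open ContinuousMap Topology

noncomputable section

@[reducible]
protected def TopologicalSpace.cocountable {X : Type*} : TopologicalSpace X where
  IsOpen s := s.Nonempty → sᶜ.Countable
  isOpen_univ _ := by simp
  isOpen_inter s t hs ht := by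
    rintro ⟨x, hxs, hxt⟩
    rw [Set.compl_inter]
    exact (hs ⟨x, hxs⟩).union (ht ⟨x, hxt⟩)
  isOpen_sUnion S hS := by
    rintro ⟨x, s, hsS, hxs⟩
    exact (hS s hsS ⟨x, hxs⟩).mono (Set.compl_subset_compl.2 (Set.subset_sUnion_of_mem hsS))

abbrev CocountableTopology (X : Type*) :=
  WithTopology X .cocountable

namespace CocountableTopology

open Set

variable {X : Type*}

theorem isOpen_iff {s : Set (CocountableTopology X)} :
    IsOpen s ↔ s.Nonempty → sᶜ.Countable := by
  rw [WithTopology.isOpen_iff, WithTopology.preimage_toTopology]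
  show (_ → _) ↔ _
  rw [image_nonempty, ← image_compl_eq (WithTopology.ofTopology_bijective _)]
  exact imp_congr_right fun _ => ⟨countable_of_injective_of_countable_image
    (WithTopology.ofTopology_injective _).injOn, (·.image _)⟩

theorem isClosed_of_countable {s : Set (CocountableTopology X)} (hs : s.Countable) :
    IsClosed s :=
  isOpen_compl_iff.1 (isOpen_iff.2 fun _ => by rwa [compl_compl])

theorem isDiscrete_of_countable {s : Set (CocountableTopology X)} (hs : s.Countable) :
    IsDiscrete s :=
  isDiscrete_iff_forall_mem_exists_isClosed.2 fun t hts =>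
    ⟨t, isClosed_of_countable (hs.mono hts), inter_eq_left.2 hts⟩

theorem finite_of_isCompact {s : Set (CocountableTopology X)} (hs : IsCompact s) : s.Finite := by
  refine not_infinite.1 fun hinf => ?_
  let t := range ((↑) ∘ hinf.natEmbedding s : ℕ → CocountableTopology X)
  have hts : t ⊆ s := range_subset_iff.2 fun n => (hinf.natEmbedding s n).2
  have htc : t.Countable := countable_range _
  have htinf : t.Infinite :=
    infinite_range_of_injective (Subtype.val_injective.comp (hinf.natEmbedding s).injective)
  exact htinf ((hs.of_isClosed_subset (isClosed_of_countable htc) hts).finite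
    (isDiscrete_of_countable htc))

theorem subsingleton_of_isCompact_of_isPreconnected {s : Set (CocountableTopology X)}
    (hc : IsCompact s) (hp : IsPreconnected s) : s.Subsingleton :=
  hp.isDiscrete_iff_subsingleton.1 (isDiscrete_of_countable (finite_of_isCompact hc).countable)

instance [Uncountable X] : Uncountable (CocountableTopology X) :=
  (WithTopology.toTopology_injective _).uncountable

instance [Uncountable X] : PreirreducibleSpace (CocountableTopology X) where
  isPreirreducible_univ u v hu hv := by
    rintro ⟨x, -, hxu⟩ ⟨y, -, hyv⟩
    rw [univ_inter]
    by_contra huv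
    refine not_countable_univ (α := CocountableTopology X) ?_
    rw [← compl_empty, ← not_nonempty_iff_eq_empty.1 huv, compl_inter]
    exact (isOpen_iff.1 hu ⟨x, hxu⟩).union (isOpen_iff.1 hv ⟨y, hyv⟩)

def ofDiscrete : C(WithDiscreteTopology X, CocountableTopology X) :=
  ⟨fun x => WithTopology.toTopology _ x.ofTopology, continuous_of_discreteTopology⟩

theorem ofDiscrete_bijective : Function.Bijective (ofDiscrete (X := X)) :=
  (WithTopology.toTopology_bijective _).comp (WithTopology.ofTopology_bijective _)

end CocountableTopology

section WeakHomotopyEquiv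

open Function

variable {A B : Type*} [TopologicalSpace A] [TopologicalSpace B]

theorem ContinuousMap.apply_eq_apply_of_forall_subsingleton
    (hB : ∀ s : Set B, IsCompact s → IsPreconnected s → s.Subsingleton) {K : Type*}
    [TopologicalSpace K] [CompactSpace K] [PreconnectedSpace K] (g : C(K, B)) (k k' : K) :
    g k = g k' :=
  hB _ (isCompact_range g.continuous) (isPreconnected_range g.continuous) ⟨k, rfl⟩ ⟨k', rfl⟩

variable {f : C(A, B)}

theorem zerothMap_bijective
    (hB : ∀ s : Set B, IsCompact s → IsPreconnected s → s.Subsingleton)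
    (hf : Bijective f) : Bijective (zerothMap f) := by
  refine ⟨fun p q hpq => ?_, fun q => ?_⟩
  · induction p using Quotient.inductionOn with | h a => ?_
    induction q using Quotient.inductionOn with | h b => ?_
    obtain ⟨γ⟩ : Joined (f a) (f b) := Quotient.exact hpq
    have hab : f a = f b := by
      simpa using (γ : C(unitInterval, B)).apply_eq_apply_of_forall_subsingleton hB 0 1
    rw [hf.1 hab]
  · induction q using Quotient.inductionOn with | h b => ?_
    obtain ⟨a, rfl⟩ := hf.2 b
    exact ⟨Quotient.mk _ a, rfl⟩

theorem piMap_bijective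
    (hB : ∀ s : Set B, IsCompact s → IsPreconnected s → s.Subsingleton)
    (hf : Bijective f) (n : ℕ) (a : A) : Bijective (piMap f n a) := by
  refine ⟨fun p q hpq => ?_, fun q => ?_⟩
  · induction p using Quotient.inductionOn with | h p => ?_
    induction q using Quotient.inductionOn with | h q => ?_
    obtain ⟨H⟩ := Quotient.exact hpq
    refine congrArg _ (Subtype.ext (ContinuousMap.ext fun y => hf.1 ?_))
    simpa using H.toContinuousMap.apply_eq_apply_of_forall_subsingleton hB (0, y) (1, y)
  · induction q using Quotient.inductionOn with | h q => ?_
    obtain ⟨a', ha'⟩ := hf.2 (q fun _ => 0)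
    have hq : ∀ y, q y = f a' := fun y =>
      ha' ▸ q.1.apply_eq_apply_of_forall_subsingleton hB y _
    refine ⟨Quotient.mk _ ⟨.const _ a', fun y hy => hf.1 ((hq y).symm.trans (q.2 y hy))⟩,
      congrArg _ (Subtype.ext (ContinuousMap.ext fun y => (hq y).symm))⟩

theorem isWeakHomotopyEquiv_of_bijective
    (hB : ∀ s : Set B, IsCompact s → IsPreconnected s → s.Subsingleton)
    (hf : Bijective f) : IsWeakHomotopyEquiv f :=
  ⟨zerothMap_bijective hB hf, piMap_bijective hB hf⟩

end WeakHomotopyEquiv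

theorem connectedComponent_eq_of_homotopic_comp {A B X : Type*} [TopologicalSpace A]
    [TopologicalSpace B] [TopologicalSpace X] [PreconnectedSpace B] {f : C(A, B)} {g : C(B, X)}
    {k : C(A, X)} (hgk : (g.comp f).Homotopic k) (a a' : A) :
    connectedComponent (k a) = connectedComponent (k a') := by
  obtain ⟨H⟩ := hgk
  have hk : ∀ x, connectedComponent (g (f x)) = connectedComponent (k x) := fun x =>
    connectedComponent_eq (pathComponent_subset_component _ ⟨H.evalAt x⟩)
  rw [← hk, ← hk]
  exact connectedComponent_eq
    (isPreconnected_range g.continuous |>.subset_connectedComponent ⟨f a, rfl⟩ ⟨f a', rfl⟩)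

/-- If `X` inverts weak homotopy equivalences, then `X` is connected. -/
theorem stmt2 (X : Type) [TopologicalSpace X] (h : InvertsWeakEquivs X) :
    PreconnectedSpace X := by
  refine preconnectedSpace_iff_connectedComponent.2 fun x => Set.eq_univ_of_forall fun y => ?_
  have he : IsWeakHomotopyEquiv (CocountableTopology.ofDiscrete (X := ℝ)) :=
    isWeakHomotopyEquiv_of_bijective
      (fun _ => CocountableTopology.subsingleton_of_isCompact_of_isPreconnected)
      CocountableTopology.ofDiscrete_bijective
  let k : C(WithDiscreteTopology ℝ, X) :=
    ⟨fun r => if r.ofTopology = 0 then x else y, continuous_of_discreteTopology⟩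
  obtain ⟨c, hc⟩ := (h _ _ _ he).2 (Quotient.mk _ k)
  induction c using Quotient.inductionOn with | h g => ?_
  have hxy : connectedComponent x = connectedComponent y := by
    simpa [k] using connectedComponent_eq_of_homotopic_comp (Quotient.exact hc)
      (WithTopology.toTopology ⊥ 0) (WithTopology.toTopology ⊥ 1)
  exact hxy ▸ mem_connectedComponent
end
end

section
/- If a topological space X inverts weak homotopy equivalences, then X is path-connected. -/
open ContinuousMap Topology

noncomputable section

/-!
Take a set `V` much larger than `Set X` and compare the discrete topology on `V` with the topology
whose nonempty open sets are those with complement of cardinality at most `b = #(Set X ⊕ ℕ)`.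
In the latter, countable sets are closed, so compact sets are finite; hence in both topologies
every map from a compact connected space is constant, and the identity of `V` is a weak homotopy
equivalence. Surjectivity of precomposition makes a map from discrete `V` that hits `x` and `y`
homotopic to a continuous `k` on the coarse `V`. At most `#(Set X)` nonempty preimages of open
sets under `k` each have small complement, so they share a point `v`; then `k v` specializes to
every value of `k`, and all of these values lie in one path component.
-/

open Cardinal Filter

universe u

theorem Specializes.joined {X : Type*} [TopologicalSpace X] {x y : X} (h : x ⤳ y) :
    Joined x y :=
  joinedIn_univ.mp (h.joinedIn trivial trivial)

section

variable {T : Type*} [TopologicalSpace T]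

theorem IsCompact.finite_of_forall_countable_isClosed
    (hT : ∀ s : Set T, s.Countable → IsClosed s) {K : Set T} (hK : IsCompact K) : K.Finite := by
  refine Set.not_infinite.mp fun hinf => ?_
  let e := hinf.natEmbedding K
  obtain ⟨x, -, hx⟩ := (Set.infinite_range_of_injective (Subtype.val_injective.comp e.injective)
    ).exists_accPt_of_subset_isCompact hK (Set.range_subset_iff.mpr fun n => (e n).2)
  have hclosed : IsClosed (Set.range (fun n => (e n : T)) \ {x}) :=
    hT _ ((Set.countable_range _).mono Set.sdiff_subset)
  have hx' : x ∈ Set.range (fun n => (e n : T)) \ {x} :=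
    hclosed.closure_eq ▸ mem_closure_iff_clusterPt.mpr (accPt_principal_iff_clusterPt.mp hx)
  exact hx'.2 rfl

def ConstOnCompactPreconnected (T : Type*) [TopologicalSpace T] : Prop :=
  ∀ (K : Type) [TopologicalSpace K] [CompactSpace K] [PreconnectedSpace K] (f : C(K, T))
    (a b : K), f a = f b

theorem constOnCompactPreconnected_of_discreteTopology [DiscreteTopology T] :
    ConstOnCompactPreconnected T :=
  fun _ _ _ hK f _ _ => hK.constant f.continuous

theorem constOnCompactPreconnected_of_forall_countable_isClosed
    (hT : ∀ s : Set T, s.Countable → IsClosed s) : ConstOnCompactPreconnected T := by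
  have : T1Space T := ⟨fun x => hT _ (Set.countable_singleton x)⟩
  intro K _ _ _ f a b
  by_contra hne
  exact (isPreconnected_range f.continuous).infinite_of_nontrivial
    ⟨f a, ⟨a, rfl⟩, f b, ⟨b, rfl⟩, hne⟩
    ((isCompact_range f.continuous).finite_of_forall_countable_isClosed hT)

namespace ConstOnCompactPreconnected

theorem eq_of_joined (hT : ConstOnCompactPreconnected T) {a b : T} (h : Joined a b) :
    a = b := by
  simpa using hT unitInterval h.somePath.toContinuousMap 0 1

theorem genLoop_apply_eq (hT : ConstOnCompactPreconnected T) {N : Type} {t : T}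
    (p : GenLoop N T t) (y z : N → unitInterval) : p y = p z :=
  hT _ p.1 y z

theorem eq_of_genLoop_homotopic (hT : ConstOnCompactPreconnected T) {N : Type} {t : T}
    {p q : GenLoop N T t} (h : GenLoop.Homotopic p q) : p = q := by
  obtain ⟨H⟩ := h
  ext y
  simpa using hT _ H.toContinuousMap (0, y) (1, y)

end ConstOnCompactPreconnected

end

section

variable {A B : Type*} [TopologicalSpace A] [TopologicalSpace B] {f : C(A, B)}

theorem bijective_zerothMap (hB : ConstOnCompactPreconnected B) (hf : Function.Bijective f) :
    Function.Bijective (zerothMap f) := by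
  refine ⟨fun u v huv => ?_, fun v => ?_⟩
  · induction u using Quotient.ind
    induction v using Quotient.ind
    exact congrArg _ (hf.1 (hB.eq_of_joined (Quotient.exact huv)))
  · induction v using Quotient.ind with | _ b
    obtain ⟨a, rfl⟩ := hf.2 b
    exact ⟨Quotient.mk _ a, rfl⟩

theorem bijective_piMap (hA : ConstOnCompactPreconnected A) (hB : ConstOnCompactPreconnected B)
    (hf : Function.Bijective f) (n : ℕ) (a : A) : Function.Bijective (piMap f n a) := by
  let c : Fin n → unitInterval := fun _ => 0
  refine ⟨fun u v huv => ?_, fun v => ?_⟩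
  · induction u using Quotient.ind with | _ p
    induction v using Quotient.ind with | _ q
    have hpq := congrArg (· c) (hB.eq_of_genLoop_homotopic (Quotient.exact huv))
    refine congrArg _ (GenLoop.ext _ _ fun y => ?_)
    rw [hA.genLoop_apply_eq p y c, hA.genLoop_apply_eq q y c]
    exact hf.1 hpq
  · induction v using Quotient.ind with | _ q
    obtain ⟨w, hw⟩ := hf.2 (q c)
    have hwa : ∀ y ∈ Cube.boundary (Fin n), w = a := fun y hy =>
      hf.1 (by rw [hw, hB.genLoop_apply_eq q c y, GenLoop.boundary q y hy])
    refine ⟨Quotient.mk _ ⟨ContinuousMap.const _ w, hwa⟩,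
      congrArg _ (GenLoop.ext _ _ fun y => hw.trans (hB.genLoop_apply_eq q c y))⟩

theorem isWeakHomotopyEquiv_of_bijective_s3 (hA : ConstOnCompactPreconnected A)
    (hB : ConstOnCompactPreconnected B) (hf : Function.Bijective f) : IsWeakHomotopyEquiv f :=
  ⟨bijective_zerothMap hB hf, bijective_piMap hA hB hf⟩

end

@[reducible]
def TopologicalSpace.ofFilter {α : Type*} (F : Filter α) : TopologicalSpace α where
  IsOpen s := s.Nonempty → s ∈ F
  isOpen_univ _ := univ_mem
  isOpen_inter _ _ hs ht := fun ⟨_, hxs, hxt⟩ => inter_mem (hs ⟨_, hxs⟩) (ht ⟨_, hxt⟩)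
  isOpen_sUnion _ hS := fun ⟨_, t, htS, hxt⟩ =>
    mem_of_superset (hS t htS ⟨_, hxt⟩) (Set.subset_sUnion_of_mem htS)

theorem isClosed_ofFilter_cocardinal {α : Type u} {c : Cardinal.{u}} (hc : c.IsRegular)
    {s : Set α} (hs : #s < c) : IsClosed[.ofFilter (cocardinal α hc)] s :=
  @isOpen_compl_iff _ _ (.ofFilter _) |>.mp fun _ => compl_mem_cocardinal_of_card_lt hs

instance {α : Type*} : DiscreteTopology (WithTopology α ⊥) := ⟨coinduced_bot⟩

theorem exists_forall_specializes_apply {V X : Type u} [TopologicalSpace V] [TopologicalSpace X]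
    {c : Cardinal.{u}} (F : Filter V) [F.NeBot] [CardinalInterFilter F c]
    (hF : ∀ s : Set V, IsOpen s → s.Nonempty → s ∈ F) (hX : #(Set X) < c) (k : C(V, X)) :
    ∃ v, ∀ w, k v ⤳ k w := by
  let S := {U : Set X // IsOpen U ∧ (k ⁻¹' U).Nonempty}
  have hS : ⋂ U : S, k ⁻¹' U.1 ∈ F :=
    (cardinal_iInter_mem ((mk_subtype_le _).trans_lt hX)).mpr fun U =>
      hF _ (U.2.1.preimage k.continuous) U.2.2
  obtain ⟨v, hv⟩ := nonempty_of_mem hS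
  refine ⟨v, fun w => specializes_iff_forall_open.mpr fun U hU hw => ?_⟩
  exact Set.mem_iInter.mp hv ⟨U, hU, w, hw⟩

theorem exists_isWeakHomotopyEquiv_ofTopology_forall_joined (X : Type u) [TopologicalSpace X] :
    ∃ (V : Type u) (_ : TopologicalSpace V), Nontrivial V ∧
      IsWeakHomotopyEquiv (A := WithTopology V ⊥)
        ⟨WithTopology.ofTopology, continuous_of_discreteTopology⟩ ∧
      ∀ (k : C(V, X)) (v w : V), Joined (k v) (k w) := by
  let b := #(Set X ⊕ ULift.{u} ℕ)
  have hb : ℵ₀ ≤ b := aleph0_le_mk _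
  have hc : (Order.succ b).IsRegular := isRegular_succ hb
  let V := Set (Set X ⊕ ULift.{u} ℕ)
  let t : TopologicalSpace V := .ofFilter (cocardinal V hc)
  have hcV : Order.succ b ≤ #V := by
    rw [mk_set]
    exact Order.succ_le_of_lt (cantor b)
  have : (cocardinal V hc).NeBot := by
    simpa using (cocardinal_inf_principal_neBot_iff (s := Set.univ)).mpr (by rwa [mk_univ])
  refine ⟨V, t, ⟨∅, .univ, Set.empty_ne_univ⟩, ?_, fun k v w => ?_⟩
  · refine isWeakHomotopyEquiv_of_bijective_s3 constOnCompactPreconnected_of_discreteTopology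
      (constOnCompactPreconnected_of_forall_countable_isClosed fun s hs => ?_)
      (WithTopology.ofTopology_bijective _)
    exact isClosed_ofFilter_cocardinal hc (hs.le_aleph0.trans_lt (Order.lt_succ_of_le hb))
  · obtain ⟨u, hu⟩ := exists_forall_specializes_apply (cocardinal V hc) (fun _ hs => hs)
      (Order.lt_succ_of_le (mk_le_of_injective (Sum.inl_injective (β := ULift ℕ)))) k
    exact (hu v).joined.symm.trans (hu w).joined

/-- If `X` inverts weak homotopy equivalences, then `X` is path-connected. -/
theorem stmt3 (X : Type) [TopologicalSpace X] (h : InvertsWeakEquivs X) :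
    ∀ x y : X, Joined x y := by
  classical
  intro x y
  obtain ⟨V, _, ⟨a, b, hab⟩, hι, hV⟩ :=
    exists_isWeakHomotopyEquiv_ofTopology_forall_joined X
  let g : C(WithTopology V ⊥, X) :=
    ⟨fun v => if v.ofTopology = a then x else y, continuous_of_discreteTopology⟩
  obtain ⟨⟨k⟩, hk⟩ := (h _ _ _ hι).2 (Quotient.mk _ g)
  obtain ⟨H⟩ : (k.comp _).Homotopic g := Quotient.exact hk
  have hx : Joined (k a) x := ⟨(H.evalAt (.toTopology ⊥ a)).cast rfl (by simp [g])⟩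
  have hy : Joined (k b) y := ⟨(H.evalAt (.toTopology ⊥ b)).cast rfl (by simp [g, hab.symm])⟩
  exact hx.symm.trans ((hV k a b).trans hy)
end
end

section
/- Let F : B × [0,1] → X be a homotopy, where B = {0} ∪ {1/n : n ≥ 1} ⊆ ℝ, with F(0,t) = x₀ for all t. Define γ : [0,1] → X by γ(0) = x₀ and γ(t) = F(1/n, (1/n − 1/(n+1))⁻¹ (t − 1/(n+1))) for t ∈ [1/(n+1), 1/n]. Then γ is a continuous path from x₀ to F(1,1), provided F(1/n, 1) = F(1/(n−1), 0) for all n ≥ 2 (so the pieces glue). -/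
open ContinuousMap Topology

noncomputable section

/-- The subspace `{0} ∪ {1/n : n ≥ 1}` of `ℝ`. -/
def Bset : Set ℝ := {x | x = 0 ∨ ∃ n : ℕ, 1 ≤ n ∧ x = 1 / n}

/-! On `[1/(n+1), 1/n]` the path is `F (1/n, ·)` reparametrized affinely; the gluing condition
makes these pieces agree at the common endpoints. Away from `0` continuity is then a finite
pasting argument, since a neighbourhood of `t > 0` in `[0, 1]` meets only finitely many pieces.
At `0` one uses compactness of `I`: the maps `F (1/n, ·)` converge to the constant map `x₀` in
the compact-open topology, so for large `n` the whole path `F (1/n, ·)` lies in any given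
neighbourhood of `x₀`. -/

section

open Set Filter

variable {X : Type*} [TopologicalSpace X]

theorem ContinuousMap.eventually_forall_apply_mem {Y K α : Type*} [TopologicalSpace Y]
    [TopologicalSpace K] [CompactSpace K] (F : C(Y × K, X)) {l : Filter α} {u : α → Y} {y : Y}
    (hu : Tendsto u l (𝓝 y)) {U : Set X} (hU : IsOpen U) (hy : ∀ k, F (y, k) ∈ U) :
    ∀ᶠ a in l, ∀ k, F (u a, k) ∈ U := by
  have hmapsTo := eventually_mapsTo (f := F.curry y) isCompact_univ hU fun k _ => hy k
  filter_upwards [(F.curry.continuous.tendsto y).comp hu hmapsTo] with a ha k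
  exact ha (mem_univ k)

theorem continuousOn_Icc_one_div_succ_one {f : ℝ → X}
    (hf : ∀ n : ℕ, 1 ≤ n → ContinuousOn f (Icc (1 / ((n : ℝ) + 1)) (1 / n))) (N : ℕ) :
    ContinuousOn f (Icc (1 / ((N : ℝ) + 1)) 1) := by
  induction N with
  | zero => simp
  | succ N ih =>
    have hsplit : Icc (1 / ((N + 1 : ℕ) + 1 : ℝ)) (1 / ((N : ℝ) + 1)) ∪ Icc (1 / ((N : ℝ) + 1)) 1
        = Icc (1 / ((N + 1 : ℕ) + 1 : ℝ)) 1 := by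
      refine Icc_union_Icc_eq_Icc ?_ ?_
      · gcongr; linarith
      · rw [div_le_one (by positivity)]; linarith [N.cast_nonneg (α := ℝ)]
    rw [← hsplit]
    refine ContinuousOn.union_of_isClosed ?_ ih isClosed_Icc isClosed_Icc
    simpa using hf (N + 1) (by omega)

theorem continuousOn_Icc_of_continuousOn_Icc_one_div {f : ℝ → X}
    (h₀ : ContinuousWithinAt f (Icc 0 1) 0)
    (hf : ∀ n : ℕ, 1 ≤ n → ContinuousOn f (Icc (1 / ((n : ℝ) + 1)) (1 / n))) :
    ContinuousOn f (Icc 0 1) := by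
  intro t ht
  rcases ht.1.eq_or_lt with rfl | hpos
  · exact h₀
  obtain ⟨N, hN⟩ := exists_nat_one_div_lt hpos
  refine ((continuousOn_Icc_one_div_succ_one hf N) t ⟨hN.le, ht.2⟩).mono_of_mem_nhdsWithin ?_
  filter_upwards [self_mem_nhdsWithin, nhdsWithin_le_nhds (Ioi_mem_nhds hN)] with s hs hs'
  exact ⟨le_of_lt hs', hs.2⟩

theorem Nat.floor_one_div_eq {n : ℕ} {t : ℝ} (h₁ : 1 / ((n : ℝ) + 1) < t) (h₂ : t ≤ 1 / n) :
    ⌊1 / t⌋₊ = n := by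
  have ht : 0 < t := lt_trans (by positivity) h₁
  rw [Nat.floor_eq_iff (by positivity)]
  constructor
  · rcases n.eq_zero_or_pos with rfl | hn
    · simpa using ht.le
    · exact (le_one_div (by positivity) ht).2 h₂
  · exact (one_div_lt ht (by positivity)).2 h₁

namespace Bset

theorem one_div_natCast_mem (n : ℕ) : (1 / n : ℝ) ∈ Bset := by
  rcases n.eq_zero_or_pos with rfl | hn
  · left; simp
  · exact Or.inr ⟨n, hn, rfl⟩

def oneDiv (n : ℕ) : Bset := ⟨1 / n, one_div_natCast_mem n⟩

theorem tendsto_oneDiv : Tendsto oneDiv atTop (𝓝 ⟨0, Or.inl rfl⟩) :=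
  tendsto_subtype_rng.2 tendsto_one_div_atTop_nhds_zero_nat

end Bset

def stretch (n : ℕ) (t : ℝ) : ℝ := (1 / (n : ℝ) - 1 / ((n : ℝ) + 1))⁻¹ * (t - 1 / ((n : ℝ) + 1))

theorem stretch_one_div_succ (n : ℕ) : stretch n (1 / ((n : ℝ) + 1)) = 0 := by
  simp [stretch]

theorem stretch_one_div (n : ℕ) : stretch n (1 / n) = 1 := by
  refine inv_mul_cancel₀ (sub_ne_zero.2 ?_)
  simp

theorem stretch_mem_Icc {n : ℕ} (hn : 1 ≤ n) {t : ℝ} (h₁ : 1 / ((n : ℝ) + 1) ≤ t)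
    (h₂ : t ≤ 1 / n) : stretch n t ∈ Icc 0 1 := by
  have hd : 0 < 1 / (n : ℝ) - 1 / ((n : ℝ) + 1) := by
    have hn' : (0 : ℝ) < n := by exact_mod_cast hn
    rw [sub_pos]
    gcongr
    linarith
  constructor
  · exact mul_nonneg (inv_nonneg.2 hd.le) (by linarith)
  · rw [stretch, inv_mul_le_iff₀ hd]
    linarith

variable (x₀ : X) (F : C(Bset × unitInterval, X))

def piece (n : ℕ) (t : ℝ) : X := F (Bset.oneDiv n, projIcc 0 1 zero_le_one (stretch n t))

theorem continuous_piece (n : ℕ) : Continuous (piece F n) := by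
  unfold piece stretch
  fun_prop

-- For `0 < t ≤ 1`, `⌊1/t⌋₊` is the `n` with `t ∈ (1/(n+1), 1/n]` (`Nat.floor_one_div_eq`).
def gluedPath (t : ℝ) : X := if t = 0 then x₀ else piece F ⌊1 / t⌋₊ t

theorem gluedPath_zero : gluedPath x₀ F 0 = x₀ := if_pos rfl

theorem gluedPath_one : gluedPath x₀ F 1 = F (Bset.oneDiv 1, 1) := by
  have hstretch : stretch 1 1 = 1 := by simpa using stretch_one_div 1
  rw [gluedPath, if_neg one_ne_zero, div_one, Nat.floor_one, piece, hstretch, projIcc_right]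
  rfl

theorem gluedPath_eqOn_piece
    (hstep : ∀ m : ℕ, 1 ≤ m → F (Bset.oneDiv (m + 1), 1) = F (Bset.oneDiv m, 0))
    {n : ℕ} (hn : 1 ≤ n) : EqOn (gluedPath x₀ F) (piece F n) (Icc (1 / ((n : ℝ) + 1)) (1 / n)) := by
  rintro t ⟨h₁, h₂⟩
  rw [gluedPath, if_neg (lt_of_lt_of_le (by positivity) h₁).ne']
  rcases h₁.eq_or_lt with rfl | h₁
  · have hfloor : ⌊1 / (1 / ((n : ℝ) + 1))⌋₊ = n + 1 := by
      rw [one_div_one_div]; exact_mod_cast Nat.floor_natCast (n + 1)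
    have hstretch : stretch (n + 1) (1 / ((n : ℝ) + 1)) = 1 := by
      simpa using stretch_one_div (n + 1)
    rw [hfloor, piece, piece, hstretch, stretch_one_div_succ, projIcc_left, projIcc_right]
    exact hstep n hn
  · rw [Nat.floor_one_div_eq h₁ h₂]

theorem continuousWithinAt_gluedPath_zero (hF0 : ∀ t : unitInterval, F (⟨0, Or.inl rfl⟩, t) = x₀) :
    ContinuousWithinAt (gluedPath x₀ F) (Icc 0 1) 0 := by
  rw [ContinuousWithinAt, gluedPath_zero, tendsto_nhds]
  intro U hU hx
  obtain ⟨N, hN⟩ := eventually_atTop.1 <|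
    F.eventually_forall_apply_mem Bset.tendsto_oneDiv hU fun s => (hF0 s).symm ▸ hx
  have hN₁ : (0 : ℝ) < N + 1 := N.cast_add_one_pos
  filter_upwards [self_mem_nhdsWithin, nhdsWithin_le_nhds (Iio_mem_nhds (one_div_pos.2 hN₁))]
    with t ht ht'
  rcases ht.1.eq_or_lt with rfl | hpos
  · rwa [mem_preimage, gluedPath_zero]
  · rw [mem_preimage, gluedPath, if_neg hpos.ne']
    have hNt := (lt_one_div hN₁ hpos).2 ht'
    exact hN _ (Nat.le_floor (by linarith)) _

end

/-- Gluing the paths `t ↦ F (1/n, t)` of a homotopy `F : B × I → X` with `F (0, ·) ≡ x₀` and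
matching endpoints yields a continuous path `γ` from `x₀` to `F (1, 1)` with
`γ t = F (1/n, (1/n − 1/(n+1))⁻¹ (t − 1/(n+1)))` for `t ∈ [1/(n+1), 1/n]`. -/
theorem stmt15 (X : Type) [TopologicalSpace X] (x₀ : X) (F : C(Bset × unitInterval, X))
    (hF0 : ∀ t : unitInterval, F (⟨0, Or.inl rfl⟩, t) = x₀)
    (hglue : ∀ (n : ℕ) (hn : 2 ≤ n),
      F (⟨1 / n, Or.inr ⟨n, by omega, rfl⟩⟩, 1) =
        F (⟨1 / ((n : ℝ) - 1),
            Or.inr ⟨n - 1, by omega, by rw [Nat.cast_sub (by omega : 1 ≤ n), Nat.cast_one]⟩⟩,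
          0)) :
    ∃ γ : C(unitInterval, X),
      γ 0 = x₀ ∧
      γ 1 = F (⟨1, Or.inr ⟨1, le_refl 1, by norm_num⟩⟩, 1) ∧
      ∀ (n : ℕ) (hn : 1 ≤ n) (t : unitInterval)
        (ht : 1 / ((n : ℝ) + 1) ≤ (t : ℝ) ∧ (t : ℝ) ≤ 1 / n),
        γ t = F (⟨1 / n, Or.inr ⟨n, hn, rfl⟩⟩,
          ⟨(1 / (n : ℝ) - 1 / ((n : ℝ) + 1))⁻¹ * ((t : ℝ) - 1 / ((n : ℝ) + 1)), by
            have hn' : (0 : ℝ) < n := by exact_mod_cast hn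
            have hd : (0 : ℝ) < 1 / (n : ℝ) - 1 / ((n : ℝ) + 1) := by
              rw [sub_pos]
              apply one_div_lt_one_div_of_lt hn'
              linarith
            constructor
            · exact mul_nonneg (inv_nonneg.mpr hd.le) (by linarith [ht.1])
            · calc (1 / (n : ℝ) - 1 / ((n : ℝ) + 1))⁻¹ * ((t : ℝ) - 1 / ((n : ℝ) + 1))
                  ≤ (1 / (n : ℝ) - 1 / ((n : ℝ) + 1))⁻¹ * (1 / (n : ℝ) - 1 / ((n : ℝ) + 1)) :=
                    mul_le_mul_of_nonneg_left (by linarith [ht.2]) (inv_nonneg.mpr hd.le)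
                _ = 1 := inv_mul_cancel₀ hd.ne'⟩) := by
  have hstep (m : ℕ) (hm : 1 ≤ m) : F (Bset.oneDiv (m + 1), 1) = F (Bset.oneDiv m, 0) := by
    refine (hglue (m + 1) (by omega)).trans (congrArg (fun b : Bset => F (b, 0)) ?_)
    simp [Bset.oneDiv]
  have hcont : ContinuousOn (gluedPath x₀ F) (Set.Icc 0 1) :=
    continuousOn_Icc_of_continuousOn_Icc_one_div (continuousWithinAt_gluedPath_zero x₀ F hF0)
      fun n hn => (continuous_piece F n).continuousOn.congr (gluedPath_eqOn_piece x₀ F hstep hn)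
  refine ⟨⟨_, hcont.domRestrict⟩, gluedPath_zero x₀ F, ?_, fun n hn t ht => ?_⟩
  · change gluedPath x₀ F 1 = _
    rw [gluedPath_one]
    simp [Bset.oneDiv]
  · change gluedPath x₀ F t = _
    rw [gluedPath_eqOn_piece x₀ F hstep hn ht, piece,
      Set.projIcc_of_mem _ (stretch_mem_Icc hn ht.1 ht.2)]
    rfl
end
end
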